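/- arXiv:1411.3278 — 9 statements merged into one kernel-verified Lean document; each statement's English description precedes it below -/
import Mathlib

section
/- If A and B are finite abelian groups and there exists a map f : A × B → C into a finite cyclic group C which is a homomorphism in each variable separately and nondegenerate (f(a,B)=1 implies a=1, and f(A,b)=1 implies b=1), then A is isomorphic to B. -/
/-!
Composing `f` with an embedding of the cyclic group `C` into `ℂˣ`, nondegeneracy turns
`a ↦ f(a, ·)` into an embedding of `A` into the character group of `B`, and symmetrically.
A finite abelian group is (noncanonically) isomorphic to its character group, so
`|A| ≤ |B| ≤ |A|` and the first embedding is an isomorphism `A ≃ B^ ≃ B`.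
-/

open Function

namespace MonoidHom

variable {A B N : Type*} [MulOneClass B] [CommGroup N]

def mk₂ [MulOneClass A] (g : A → B → N) (h₁ : ∀ a b₁ b₂, g a (b₁ * b₂) = g a b₁ * g a b₂)
    (h₂ : ∀ a₁ a₂ b, g (a₁ * a₂) b = g a₁ b * g a₂ b) : A →* B →* N :=
  mk' (fun a ↦ mk' (g a) (h₁ a)) fun a₁ a₂ ↦ ext (h₂ a₁ a₂)

theorem mk₂_injective [Group A] {g : A → B → N}
    (h₁ : ∀ a b₁ b₂, g a (b₁ * b₂) = g a b₁ * g a b₂)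
    (h₂ : ∀ a₁ a₂ b, g (a₁ * a₂) b = g a₁ b * g a₂ b) (hg : ∀ a, (∀ b, g a b = 1) → a = 1) :
    Injective (mk₂ g h₁ h₂) :=
  (injective_iff_map_eq_one _).2 fun a ha ↦ hg a fun b ↦ DFunLike.congr_fun ha b

end MonoidHom

theorem IsCyclic.exists_monoidHom_units_injective (C M : Type*) [Group C] [Finite C]
    [IsCyclic C] [CommMonoid M] [HasEnoughRootsOfUnity M (Nat.card C)] :
    ∃ ι : C →* Mˣ, Injective ι :=
  ⟨(rootsOfUnity (Nat.card C) M).subtype.comp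
      (mulEquivOfCyclicCardEq (HasEnoughRootsOfUnity.natCard_rootsOfUnity M _).symm).toMonoidHom,
    Subtype.val_injective.comp (MulEquiv.injective _)⟩

theorem CommGroup.nonempty_mulEquiv_of_injective_dual {A B M : Type*} [CommGroup A] [Finite A]
    [CommGroup B] [Finite B] [CommMonoid M] [HasEnoughRootsOfUnity M (Monoid.exponent A)]
    [HasEnoughRootsOfUnity M (Monoid.exponent B)] {F : A →* B →* Mˣ} (hF : Injective F)
    {G : B → A →* Mˣ} (hG : Injective G) : Nonempty (A ≃* B) := by
  have : Finite (A →* Mˣ) :=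
    .of_equiv A (monoidHom_mulEquiv_of_hasEnoughRootsOfUnity A M).some.symm
  have hcard : Nat.card (B →* Mˣ) ≤ Nat.card A := by
    simpa only [card_monoidHom_of_hasEnoughRootsOfUnity] using Nat.card_le_card_of_injective G hG
  exact ⟨(MulEquiv.ofBijective F (hF.bijective_of_nat_card_le hcard)).trans
    (monoidHom_mulEquiv_of_hasEnoughRootsOfUnity B M).some⟩

/-- If `A` and `B` are finite abelian groups and there is a nondegenerate bimultiplicative
map `f : A × B → C` into a finite cyclic group `C`, then `A ≅ B`. -/
theorem stmt_0 {A B C : Type*} [CommGroup A] [Finite A] [CommGroup B] [Finite B]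
    [Group C] [Finite C] [IsCyclic C] (f : A → B → C)
    (hmul₁ : ∀ (a : A) (b₁ b₂ : B), f a (b₁ * b₂) = f a b₁ * f a b₂)
    (hmul₂ : ∀ (a₁ a₂ : A) (b : B), f (a₁ * a₂) b = f a₁ b * f a₂ b)
    (hndA : ∀ a : A, (∀ b : B, f a b = 1) → a = 1)
    (hndB : ∀ b : B, (∀ a : A, f a b = 1) → b = 1) :
    Nonempty (A ≃* B) := by
  obtain ⟨ι, hι⟩ := IsCyclic.exists_monoidHom_units_injective C ℂ
  have : NeZero (Monoid.exponent A) := ⟨Monoid.exponent_ne_zero_of_finite⟩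
  have : NeZero (Monoid.exponent B) := ⟨Monoid.exponent_ne_zero_of_finite⟩
  have h₁ (a : A) (b₁ b₂ : B) : ι (f a (b₁ * b₂)) = ι (f a b₁) * ι (f a b₂) := by
    rw [hmul₁, map_mul]
  have h₂ (a₁ a₂ : A) (b : B) : ι (f (a₁ * a₂) b) = ι (f a₁ b) * ι (f a₂ b) := by
    rw [hmul₂, map_mul]
  have hA := MonoidHom.mk₂_injective h₁ h₂ fun a ha ↦
    hndA a fun b ↦ (map_eq_one_iff ι hι).1 (ha b)
  have hB := MonoidHom.mk₂_injective (g := fun b a ↦ ι (f a b))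
    (fun b a₁ a₂ ↦ h₂ a₁ a₂ b) (fun b₁ b₂ a ↦ h₁ a b₁ b₂) fun b hb ↦
    hndB b fun a ↦ (map_eq_one_iff ι hι).1 (hb a)
  exact CommGroup.nonempty_mulEquiv_of_injective_dual hA hB
end

section
/- If P is a Camina p-group, then the quotient P/P' is an elementary abelian p-group, i.e., every element of P/P' has order dividing p. -/
open scoped Pointwise

/-- A Camina group: a nonabelian group in which every coset of the derived subgroup
other than the derived subgroup itself is a single conjugacy class. -/
def IsCamina (P : Type*) [Group P] : Prop :=
  (¬ ∀ a b : P, a * b = b * a) ∧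
  ∀ x : P, x ∉ commutator P → {y : P | IsConj x y} = x • (commutator P : Set P)

/-!
Take `c ≠ 1` central of order `p`; it lies in `P'` since the centre of a Camina group does.
If `x ∉ P'` then `x` is conjugate to `x c`, say by `g`, and `g` fixes `xᵖ = (x c)ᵖ`.
If also `xᵖ ∉ P'`, the Camina property makes the centralizers of `x` and `xᵖ` equally large,
so `C(x) ≤ C(xᵖ)` is an equality and `g` centralizes `x`, forcing `c = 1`.
-/

open MulAction Subgroup

theorem IsPGroup.exists_mem_center_orderOf_eq {p : ℕ} [Fact p.Prime] {G : Type*} [Group G]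
    [Finite G] [Nontrivial G] (hG : IsPGroup p G) : ∃ c ∈ center G, orderOf c = p := by
  have : Nontrivial (center G) := hG.center_nontrivial
  have hdvd : p ∣ Nat.card (center G) :=
    ((hG.to_subgroup _).card_eq_or_dvd).resolve_left Finite.one_lt_card.ne'
  obtain ⟨c, hc⟩ := exists_prime_orderOf_dvd_card' p hdvd
  exact ⟨c, c.2, by rw [Subgroup.orderOf_coe, hc]⟩

theorem MulAction.stabilizer_conjAct_le_pow {G : Type*} [Group G] (x : G) (n : ℕ) :
    stabilizer (ConjAct G) x ≤ stabilizer (ConjAct G) (x ^ n) := by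
  intro g hg
  rw [mem_stabilizer_iff, smul_pow', hg]

namespace IsCamina

variable {P : Type*} [Group P]

theorem nontrivial (h : IsCamina P) : Nontrivial P := by
  by_contra hP
  rw [not_nontrivial_iff_subsingleton] at hP
  exact h.1 fun _ _ => Subsingleton.elim _ _

theorem isConj_mul (h : IsCamina P) {x c : P} (hx : x ∉ commutator P)
    (hc : c ∈ commutator P) : IsConj x (x * c) := by
  show x * c ∈ {y : P | IsConj x y}
  rw [h.2 x hx]
  exact ⟨c, hc, rfl⟩

theorem center_le_commutator (h : IsCamina P) : center P ≤ commutator P := by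
  intro c hc
  by_contra hcP
  have hbot : commutator P = ⊥ := by
    refine (eq_bot_iff_forall _).mpr fun z hz => ?_
    have hcz := (h.isConj_mul hcP hz).eq_of_left_mem_center hc
    exact left_eq_mul.mp hcz
  have htop := (commutator_eq_bot_iff_center_eq_top P).mp hbot
  exact h.1 fun a b => mem_center_iff.mp (htop ▸ mem_top b) a

theorem index_stabilizer_conjAct (h : IsCamina P) {x : P} (hx : x ∉ commutator P) :
    (stabilizer (ConjAct P) x).index = Nat.card (commutator P) := by
  have horbit : orbit (ConjAct P) x = x • (commutator P : Set P) := by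
    rw [← h.2 x hx]
    ext y
    simp only [ConjAct.mem_orbit_conjAct, Set.mem_ofPred_eq, isConj_comm]
  rw [index_stabilizer, horbit, Set.ncard_smul_set, ← Nat.card_coe_set_eq]
  rfl

theorem stabilizer_conjAct_pow_eq [Finite P] (h : IsCamina P) {x : P} {n : ℕ}
    (hx : x ∉ commutator P) (hxn : x ^ n ∉ commutator P) :
    stabilizer (ConjAct P) x = stabilizer (ConjAct P) (x ^ n) := by
  have : Finite (ConjAct P) := ‹Finite P›
  refine (stabilizer_conjAct_le_pow x n).eq_of_not_lt fun hlt => ?_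
  have hindex := index_strictAnti hlt
  rw [h.index_stabilizer_conjAct hx, h.index_stabilizer_conjAct hxn] at hindex
  exact hindex.false

theorem pow_mem_commutator [Finite P] (h : IsCamina P) {n : ℕ} {c : P} (hcZ : c ∈ center P)
    (hc : c ≠ 1) (hcn : c ^ n = 1) (x : P) : x ^ n ∈ commutator P := by
  by_cases hx : x ∈ commutator P
  · exact pow_mem hx n
  by_contra hxn
  obtain ⟨g, hg⟩ := isConj_iff.mp (h.isConj_mul hx (h.center_le_commutator hcZ))
  have hg_pow : ConjAct.toConjAct g ∈ stabilizer (ConjAct P) (x ^ n) := by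
    have hxc : Commute x c := mem_center_iff.mp hcZ x
    rw [mem_stabilizer_iff, ConjAct.toConjAct_smul, ← conj_pow, hg, hxc.mul_pow, hcn, mul_one]
  rw [← h.stabilizer_conjAct_pow_eq hx hxn, mem_stabilizer_iff, ConjAct.toConjAct_smul, hg]
    at hg_pow
  exact hc (mul_eq_left.mp hg_pow)

end IsCamina

/-- If `P` is a Camina `p`-group, then `P/P'` is elementary abelian. -/
theorem stmt_2 {p : ℕ} [Fact p.Prime] {P : Type*} [Group P] [Finite P]
    (hP : IsPGroup p P) (hCam : IsCamina P) :
    ∀ x : P ⧸ commutator P, x ^ p = 1 := by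
  have := hCam.nontrivial
  obtain ⟨c, hcZ, hc⟩ := hP.exists_mem_center_orderOf_eq
  obtain ⟨hcp, hc1⟩ := orderOf_eq_prime_iff.mp hc
  intro x
  induction x using QuotientGroup.induction_on with
  | H x =>
    rw [← QuotientGroup.mk_pow, QuotientGroup.eq_one_iff]
    exact hCam.pow_mem_commutator hcZ hc1 hcp x
end

section
/- If P is a Camina p-group of nilpotence class 2, then |P : P'| > |P'|. -/
open scoped Pointwise

/-!
For `x ∉ P'` the Camina condition makes the conjugacy class of `x` the coset `xP'`, so
`|P : C_P(x)| = |P'|`. In class 2 the centralizer `C_P(x)` contains the central subgroup `P'`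
and also `x`, hence strictly contains `P'`, and therefore `|P : C_P(x)| < |P : P'|`.
-/

theorem Subgroup.index_centralizer_singleton {G : Type*} [Group G] (g : G) :
    (Subgroup.centralizer {g}).index = {h : G | IsConj g h}.ncard := by
  have hOrbit : MulAction.orbit (ConjAct G) g = {h : G | IsConj g h} := by
    ext h
    exact ConjAct.mem_orbit_conjAct.trans isConj_comm
  rw [Subgroup.centralizer_eq_comap_stabilizer, ← hOrbit, ← MulAction.index_stabilizer]
  exact Subgroup.index_comap_of_surjective _ ConjAct.toConjAct.surjective

theorem IsCamina.index_centralizer_singleton {P : Type*} [Group P] (hCam : IsCamina P) {x : P}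
    (hx : x ∉ commutator P) :
    (Subgroup.centralizer {x}).index = Nat.card (commutator P) := by
  rw [Subgroup.index_centralizer_singleton, hCam.2 x hx, Set.ncard_smul_set,
    ← Nat.card_coe_set_eq]
  rfl

theorem commutator_lt_centralizer_singleton {G : Type*} [Group G]
    (hclass2 : commutator G ≤ Subgroup.center G) {x : G} (hx : x ∉ commutator G) :
    commutator G < Subgroup.centralizer {x} := by
  refine SetLike.lt_iff_le_and_exists.mpr
    ⟨fun c hc => ?_, x, Subgroup.mem_centralizer_singleton_iff.mpr rfl, hx⟩
  exact Subgroup.mem_centralizer_singleton_iff.mpr (Subgroup.mem_center_iff.mp (hclass2 hc) x).symm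

theorem commutator_ne_top_of_le_center {G : Type*} [Group G]
    (hnonabelian : ¬ ∀ a b : G, a * b = b * a) (hclass2 : commutator G ≤ Subgroup.center G) :
    commutator G ≠ ⊤ := fun htop =>
  hnonabelian fun a b => Subgroup.mem_center_iff.mp (hclass2 (htop ▸ Subgroup.mem_top b)) a

theorem stmt_3_general {P : Type*} [Group P] [Finite P]
    (hCam : IsCamina P)
    (hclass2 : commutator P ≤ Subgroup.center P) :
    Nat.card (commutator P) < (commutator P).index := by
  obtain ⟨x, -, hx⟩ :=
    SetLike.exists_of_lt (lt_top_iff_ne_top.mpr (commutator_ne_top_of_le_center hCam.1 hclass2))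
  rw [← hCam.index_centralizer_singleton hx]
  exact Subgroup.index_strictAnti (commutator_lt_centralizer_singleton hclass2 hx)

/-- If `P` is a Camina `p`-group of nilpotence class 2, then `|P : P'| > |P'|`. -/
theorem stmt_3 {p : ℕ} [Fact p.Prime] {P : Type*} [Group P] [Finite P]
    (hP : IsPGroup p P) (hCam : IsCamina P)
    (hclass2 : commutator P ≤ Subgroup.center P) :
    Nat.card (commutator P) < (commutator P).index :=
  stmt_3_general hCam hclass2
end

section
/- Let P be a Camina p-group and x ∈ P with x^p ∉ P'. Then C_P(x) = C_P(x^p). -/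
/-!
In a Camina group the conjugacy class of any `y ∉ P'` is the coset `yP'`, so by orbit–stabilizer
every such `y` has a centralizer of index `|P'|`. If `x ^ p ∉ P'` then also `x ∉ P'`, so
`C(x) ≤ C(x ^ p)` is an inclusion of subgroups of the same finite index, hence an equality.
-/

open scoped Pointwise

namespace Subgroup

variable {G : Type*} [Group G]

theorem index_centralizer_singleton_s5 (g : G) :
    (centralizer {g}).index = {h | IsConj g h}.ncard := by
  rw [centralizer_eq_comap_stabilizer]
  refine (index_comap_of_surjective (MulAction.stabilizer (ConjAct G) g)
    (f := (ConjAct.toConjAct (G := G)).toMonoidHom) ConjAct.toConjAct.surjective).trans ?_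
  rw [MulAction.index_stabilizer]
  exact congrArg Set.ncard (Set.ext fun _ => ConjAct.mem_orbit_conjAct.trans isConj_comm)

theorem centralizer_singleton_le_centralizer_pow (g : G) (n : ℕ) :
    centralizer {g} ≤ centralizer {g ^ n} := fun _ hg =>
  mem_centralizer_singleton_iff.mpr (Commute.pow_right (mem_centralizer_singleton_iff.mp hg) n).eq

theorem eq_of_le_of_index_eq {H K : Subgroup G} [K.FiniteIndex] (hle : H ≤ K)
    (hindex : H.index = K.index) : H = K := by
  refine le_antisymm hle (relIndex_eq_one.mp ?_)
  have := relIndex_mul_index hle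
  rw [hindex] at this
  exact (Nat.mul_eq_right K.index_ne_zero_of_finite).mp this

end Subgroup

theorem IsCamina.index_centralizer {P : Type*} [Group P] (hCam : IsCamina P)
    {y : P} (hy : y ∉ commutator P) :
    (Subgroup.centralizer {y}).index = Nat.card (commutator P) := by
  rw [Subgroup.index_centralizer_singleton_s5, hCam.2 y hy, Set.ncard_smul_set]
  exact (Nat.card_coe_set_eq _).symm

theorem stmt_5_general {p : ℕ} {P : Type*} [Group P] [Finite P]
    (hCam : IsCamina P)
    (x : P) (hx : x ^ p ∉ commutator P) :
    Subgroup.centralizer {x} = Subgroup.centralizer {x ^ p} := by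
  have hx' : x ∉ commutator P := fun h => hx (pow_mem h p)
  refine Subgroup.eq_of_le_of_index_eq (Subgroup.centralizer_singleton_le_centralizer_pow x p) ?_
  rw [hCam.index_centralizer hx', hCam.index_centralizer hx]

/-- If `P` is a Camina `p`-group and `x ∈ P` with `x^p ∉ P'`, then
`C_P(x) = C_P(x^p)`. -/
theorem stmt_5 {p : ℕ} [Fact p.Prime] {P : Type*} [Group P] [Finite P]
    (hP : IsPGroup p P) (hCam : IsCamina P)
    (x : P) (hx : x ^ p ∉ commutator P) :
    Subgroup.centralizer {x} = Subgroup.centralizer {x ^ p} :=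
  stmt_5_general hCam x hx
end

section
/- If P is a Camina p-group of nilpotence class 3, then the subgroup [P',P] is elementary abelian: every element of [P',P] has order dividing p. -/
open scoped Pointwise

/-!
Put `K = [P', P]`. Class 3 makes `K` central, and `Q = P/K` has class at most 2 and inherits
from `P` the property that `x` is conjugate to every element of `xQ'` when `x ∉ Q'`.
Choose `x ∉ Q'` with `x^p ∈ Q'` (Cauchy in `Q/Q'`). For `c ∈ Q'` the element `xc` is conjugate
to `x`, so `x^p c^p = (xc)^p` is conjugate to the central element `x^p`, whence `c^p = 1`.
Thus `a^p ∈ K` for all `a ∈ P'`; as `K` is central, `[a, g]^p = [a^p, g] = 1`, and the central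
subgroup `K` generated by these commutators has exponent `p`.
-/

open Subgroup

section

open scoped commutatorElement

variable {G H : Type*} [Group G] [Group H]

lemma map_commutator_of_surjective {f : G →* H} (hf : Function.Surjective f) :
    (commutator G).map f = commutator H := by
  rw [map_commutator_eq, f.range_eq_top.mpr hf]
  rfl

lemma IsCamina.isConj_mul_s6 (hG : IsCamina G) {x c : G} (hx : x ∉ commutator G)
    (hc : c ∈ commutator G) : IsConj x (x * c) := by
  have hmem : x * c ∈ x • (commutator G : Set G) := Set.smul_mem_smul_set hc
  rwa [← hG.2 x hx] at hmem

lemma isConj_mul_of_surjective {f : G →* H} (hf : Function.Surjective f)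
    (hG : ∀ x ∉ commutator G, ∀ c ∈ commutator G, IsConj x (x * c)) :
    ∀ y ∉ commutator H, ∀ d ∈ commutator H, IsConj y (y * d) := by
  intro y hy d hd
  rw [← map_commutator_of_surjective hf] at hy hd
  obtain ⟨k, hk, rfl⟩ := hd
  obtain ⟨x, rfl⟩ := hf y
  have hx : x ∉ commutator G := fun h => hy (mem_map_of_mem f h)
  simpa using f.map_isConj (hG x hx k hk)

lemma commutator_quotient_le_center {N : Subgroup G} [N.Normal]
    (hN : ⁅commutator G, ⊤⁆ ≤ N) : commutator (G ⧸ N) ≤ center (G ⧸ N) := by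
  have hsurj := QuotientGroup.mk'_surjective N
  rw [← commutator_top_right_eq_bot_iff_le_center, ← map_commutator_of_surjective hsurj,
    ← map_top_of_surjective _ hsurj, ← map_commutator, Subgroup.map_eq_bot_iff, QuotientGroup.ker_mk']
  exact hN

lemma IsPGroup.exists_notMem_pow_mem {p : ℕ} [Fact p.Prime] [Finite G] (hG : IsPGroup p G)
    {N : Subgroup G} [N.Normal] (hN : N ≠ ⊤) : ∃ x ∉ N, x ^ p ∈ N := by
  have : Nontrivial (G ⧸ N) := QuotientGroup.nontrivial_iff.mpr hN
  obtain ⟨n, hn, hcard⟩ := (hG.to_quotient N).nontrivial_iff_card.mp this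
  obtain ⟨y, hy⟩ := exists_prime_orderOf_dvd_card' p (hcard ▸ dvd_pow_self p hn.ne')
  obtain ⟨x, rfl⟩ := QuotientGroup.mk_surjective y
  refine ⟨x, fun hx => ?_, ?_⟩
  · rw [← QuotientGroup.eq_one_iff, ← orderOf_eq_one_iff, hy] at hx
    exact (Fact.out : p.Prime).one_lt.ne' hx
  · rw [← QuotientGroup.eq_one_iff, QuotientGroup.mk_pow, ← hy, pow_orderOf_eq_one]

lemma pow_eq_one_of_mem_commutator {p : ℕ} [Fact p.Prime] [Finite G] (hG : IsPGroup p G)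
    (hcent : commutator G ≤ center G)
    (hconj : ∀ x ∉ commutator G, ∀ c ∈ commutator G, IsConj x (x * c))
    {c : G} (hc : c ∈ commutator G) : c ^ p = 1 := by
  by_cases htop : commutator G = ⊤
  · have hbot : commutator G = ⊥ :=
      (commutator_eq_bot_iff_center_eq_top G).mpr (top_le_iff.mp (htop ▸ hcent))
    rw [hbot, mem_bot] at hc
    rw [hc, one_pow]
  obtain ⟨x, hx, hxp⟩ := hG.exists_notMem_pow_mem htop
  have hxc : Commute x c := mem_center_iff.mp (hcent hc) x
  obtain ⟨g, hg⟩ := isConj_iff.mp ((hconj x hx c hc).pow p)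
  rw [hxc.mul_pow, mem_center_iff.mp (hcent hxp) g, mul_inv_cancel_right] at hg
  exact left_eq_mul.mp hg

lemma commutatorElement_pow_left {a g : G} (h : Commute a ⁅a, g⁆) (n : ℕ) :
    ⁅a ^ n, g⁆ = ⁅a, g⁆ ^ n := by
  induction n with
  | zero => simp
  | succ n ih =>
    calc ⁅a ^ (n + 1), g⁆ = a * ⁅a ^ n, g⁆ * a⁻¹ * ⁅a, g⁆ := by
          simp only [commutatorElement_def]; group
      _ = ⁅a, g⁆ ^ (n + 1) := by
          rw [ih, (h.pow_right n).eq, mul_inv_cancel_right, pow_succ]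

lemma pow_eq_one_of_mem_commutator_top {K : Subgroup G} {n : ℕ}
    (hcent : ⁅K, (⊤ : Subgroup G)⁆ ≤ center G) (hpow : ∀ a ∈ K, a ^ n ∈ center G) :
    ∀ x ∈ ⁅K, (⊤ : Subgroup G)⁆, x ^ n = 1 := by
  intro x hx
  induction hx using closure_induction with
  | mem _ hx =>
    obtain ⟨a, ha, g, -, rfl⟩ := hx
    have hcomm : Commute a ⁅a, g⁆ :=
      mem_center_iff.mp (hcent (commutator_mem_commutator ha (mem_top g))) a
    rw [← commutatorElement_pow_left hcomm, commutatorElement_eq_one_iff_commute]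
    exact (mem_center_iff.mp (hpow a ha) g).symm
  | one => exact one_pow n
  | mul x y hx _ ihx ihy =>
    have hcomm : Commute x y := (mem_center_iff.mp (hcent hx) y).symm
    rw [hcomm.mul_pow, ihx, ihy, one_mul]
  | inv x _ ih => rw [inv_pow, ih, inv_one]

end

/-- If `P` is a Camina `p`-group of nilpotence class 3, then `[P',P]` is
elementary abelian. -/
theorem stmt_6 {p : ℕ} [Fact p.Prime] {P : Type*} [Group P] [Finite P]
    (hP : IsPGroup p P) (hCam : IsCamina P)
    (hclass3 : (⊤ : Subgroup P).lowerCentralSeries 3 = ⊥ ∧ (⊤ : Subgroup P).lowerCentralSeries 2 ≠ ⊥) :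
    ∀ x ∈ ⁅commutator P, (⊤ : Subgroup P)⁆, x ^ p = 1 := by
  set K := ⁅commutator P, (⊤ : Subgroup P)⁆
  have hK : K ≤ center P := commutator_top_right_eq_bot_iff_le_center.mp hclass3.1
  have hsurj := QuotientGroup.mk'_surjective K
  have hQ : commutator (P ⧸ K) ≤ center (P ⧸ K) := commutator_quotient_le_center le_rfl
  have hconjQ := isConj_mul_of_surjective hsurj fun _ hx _ hc => hCam.isConj_mul_s6 hx hc
  have hpow : ∀ a ∈ commutator P, a ^ p ∈ K := fun a ha => by
    rw [← QuotientGroup.eq_one_iff, QuotientGroup.mk_pow]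
    exact pow_eq_one_of_mem_commutator (hP.to_quotient K) hQ hconjQ
      (map_commutator_of_surjective hsurj ▸ mem_map_of_mem _ ha)
  exact pow_eq_one_of_mem_commutator_top hK fun a ha => hK (hpow a ha)
end

section
/- Let P be a Camina p-group of nilpotence class 3 with p odd, and let C = C_P(P') and Z = Z(P). Then C/Z is an elementary abelian p-group. -/
/-!
Everything rests on the identity `⁅x ^ n, g⁆ = ⁅x, ⁅x, g⁆⁆ ^ (n choose 2) * ⁅x, g⁆ ^ n`, valid
when `⁅x, ⁅x, g⁆⁆` is central (as it is in class 3), together with `p ∣ p choose 2` for odd `p`.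

If some `x ^ p` lay outside `P'`, the Camina property would make `g ↦ ⁅x ^ p, g⁆` hit all of `P'`,
and the identity writes `⁅x ^ p, g⁆` as the `p`-th power
`(⁅x, ⁅x, g⁆⁆ ^ ((p - 1) / 2) * ⁅x, g⁆) ^ p` of an element of the abelian group `P'`. But `y ↦ y ^ p` is onto only on the trivial finite `p`-group, whereas
`P' ≥ γ₃(P) ≠ 1`. So `P/P'` has exponent `p`, which forces the central subgroup `γ₃(P) = [P', P]`
to have exponent `p` too. For `c ∈ C` the identity then gives
`⁅c ^ p, g⁆ = ⁅c, g⁆ ^ p = ⁅g ^ p, c⁆⁻¹ = 1`, and `[C, C]` is central by the three subgroups lemma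
because `[P', C] = 1`.
-/

open scoped Pointwise
open scoped commutatorElement

theorem Nat.dvd_choose_two_self_of_odd {p : ℕ} (hp : Odd p) : p ∣ p.choose 2 :=
  ⟨(p - 1) / 2, by
    rw [Nat.choose_two_right, Nat.mul_div_assoc _ (Nat.Odd.sub_odd hp odd_one).two_dvd]⟩

theorem IsPGroup.exists_forall_pow_ne {p : ℕ} [Fact p.Prime] {G : Type*} [Group G] [Finite G]
    [Nontrivial G] (hG : IsPGroup p G) : ∃ z : G, ∀ y : G, y ^ p ≠ z := by
  by_contra! hsurj
  have hinj : Function.Injective (fun y : G => y ^ p) := Finite.injective_iff_surjective.mpr hsurj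
  obtain ⟨w, hw⟩ := exists_prime_orderOf_dvd_card' p
    (hG.card_eq_or_dvd.resolve_left Finite.one_lt_card.ne')
  have hw1 : w = 1 := hinj (by simp only [← hw, pow_orderOf_eq_one, one_pow])
  exact (Fact.out : p.Prime).one_lt.ne' (by rw [← hw, hw1, orderOf_one])

theorem IsCamina.exists_commutatorElement_eq {G : Type*} [Group G] (hG : IsCamina G) {x z : G}
    (hx : x ∉ commutator G) (hz : z ∈ commutator G) : ∃ g : G, ⁅x, g⁆ = z := by
  have hx' : x⁻¹ ∉ commutator G := by rwa [inv_mem_iff]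
  have hconj : x⁻¹ * z ∈ {y | IsConj x⁻¹ y} := by
    rw [hG.2 _ hx']
    exact Set.smul_mem_smul_set hz
  obtain ⟨g, hg⟩ := isConj_iff.mp hconj
  refine ⟨g, ?_⟩
  simp only [commutatorElement_def, mul_assoc] at hg ⊢
  rw [hg, mul_inv_cancel_left]

section

open Subgroup

variable {G : Type*} [Group G]

theorem conj_pow_eq_of_commute {x g : G} (hx : Commute x ⁅x, ⁅x, g⁆⁆)
    (hg : Commute ⁅x, g⁆ ⁅x, ⁅x, g⁆⁆) (n : ℕ) :
    x ^ n * g * (x ^ n)⁻¹ = ⁅x, ⁅x, g⁆⁆ ^ n.choose 2 * ⁅x, g⁆ ^ n * g := by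
  set a := ⁅x, g⁆ with ha
  set b := ⁅x, a⁆ with hb
  have hconj_g : MulAut.conj x g = a * g := by simp [ha, commutatorElement_def]
  have hconj_a : MulAut.conj x a = b * a := by simp [hb, commutatorElement_def]
  have hconj_b : MulAut.conj x b = b := by simp [hx.eq]
  induction n with
  | zero => simp
  | succ n ih =>
    calc x ^ (n + 1) * g * (x ^ (n + 1))⁻¹ = MulAut.conj x (x ^ n * g * (x ^ n)⁻¹) := by
          simp [pow_succ', mul_assoc]
      _ = b ^ n.choose 2 * (b * a) ^ n * (a * g) := by
          rw [ih, map_mul, map_mul, map_pow, map_pow, hconj_a, hconj_b, hconj_g]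
      _ = b ^ (n + 1).choose 2 * a ^ (n + 1) * g := by
          rw [hg.symm.mul_pow, Nat.choose_succ_succ', Nat.choose_one_right, add_comm n, pow_add,
            pow_succ a]
          simp only [mul_assoc]

theorem commutatorElement_pow_left_of_commute {x g : G} (hx : Commute x ⁅x, ⁅x, g⁆⁆)
    (hg : Commute ⁅x, g⁆ ⁅x, ⁅x, g⁆⁆) (n : ℕ) :
    ⁅x ^ n, g⁆ = ⁅x, ⁅x, g⁆⁆ ^ n.choose 2 * ⁅x, g⁆ ^ n := by
  rw [commutatorElement_def, conj_pow_eq_of_commute hx hg, mul_inv_cancel_right]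

theorem commutatorElement_pow_left_of_mem_center {x g : G} (h : ⁅x, ⁅x, g⁆⁆ ∈ center G)
    (n : ℕ) : ⁅x ^ n, g⁆ = ⁅x, ⁅x, g⁆⁆ ^ n.choose 2 * ⁅x, g⁆ ^ n :=
  commutatorElement_pow_left_of_commute (mem_center_iff.mp h x) (mem_center_iff.mp h _) n

theorem pow_eq_one_of_mem_commutator_of_le_center {H K : Subgroup G} (hc : ⁅H, K⁆ ≤ center G)
    {n : ℕ} (hgen : ∀ h ∈ H, ∀ k ∈ K, ⁅h, k⁆ ^ n = 1) {z : G} (hz : z ∈ ⁅H, K⁆) : z ^ n = 1 := by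
  rw [Subgroup.commutator_def] at hc hz
  induction hz using closure_induction with
  | mem _ hx => obtain ⟨h, hh, k, hk, rfl⟩ := hx; exact hgen h hh k hk
  | one => exact one_pow n
  | mul x y _ hy ihx ihy => rw [Commute.mul_pow (mem_center_iff.mp (hc hy) x), ihx, ihy, one_mul]
  | inv x _ ih => rw [inv_pow, ih, inv_one]

theorem commutatorElement_mem_center_of_mem_centralizer {c d : G}
    (hc : c ∈ centralizer (commutator G : Set G)) (hd : d ∈ centralizer (commutator G : Set G)) :
    ⁅c, d⁆ ∈ center G := by
  set C := centralizer (commutator G : Set G)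
  have hC : ⁅commutator G, C⁆ = ⊥ := by
    rw [commutator_comm, commutator_eq_bot_iff_le_centralizer]
  have hCT : ⁅⁅C, ⊤⁆, C⁆ = ⊥ :=
    eq_bot_iff.mpr ((commutator_mono (commutator_mono le_top le_rfl) le_rfl).trans hC.le)
  have hCCT : ⁅⁅C, C⁆, ⊤⁆ = ⊥ :=
    commutator_commutator_eq_bot_of_rotate hCT (by rwa [commutator_comm ⊤])
  have := commutator_eq_bot_iff_le_centralizer.mp hCCT (commutator_mem_commutator hc hd)
  rwa [coe_top, centralizer_univ] at this

theorem commutatorElement_mem_lowerCentralSeries_two {a : G} (ha : a ∈ commutator G) (y : G) :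
    ⁅y, a⁆ ∈ (⊤ : Subgroup G).lowerCentralSeries 2 := by
  rw [← commutatorElement_inv]
  exact inv_mem (commutator_mem_commutator ha (mem_top y))

theorem lowerCentralSeries_two_le_center (h4 : (⊤ : Subgroup G).lowerCentralSeries 3 = ⊥) :
    (⊤ : Subgroup G).lowerCentralSeries 2 ≤ center G := by
  rw [← centralizer_univ, ← coe_top]
  exact commutator_eq_bot_iff_le_centralizer.mp h4

theorem commute_of_mem_commutator (h4 : (⊤ : Subgroup G).lowerCentralSeries 3 = ⊥) {a b : G}
    (ha : a ∈ commutator G) (hb : b ∈ commutator G) : Commute a b := by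
  have h : ⁅commutator G, commutator G⁆ = ⊥ :=
    commutator_commutator_eq_bot_of_rotate (by rwa [commutator_comm ⊤]) h4
  exact (mem_centralizer_iff.mp (commutator_eq_bot_iff_le_centralizer.mp h ha) b hb).symm

theorem pow_eq_one_of_mem_lowerCentralSeries_two {n : ℕ}
    (h4 : (⊤ : Subgroup G).lowerCentralSeries 3 = ⊥) (hpow : ∀ y : G, y ^ n ∈ commutator G)
    {k : G} (hk : k ∈ (⊤ : Subgroup G).lowerCentralSeries 2) : k ^ n = 1 := by
  refine pow_eq_one_of_mem_commutator_of_le_center (H := commutator G) (K := ⊤)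
    (lowerCentralSeries_two_le_center h4) (fun a ha y _ => ?_) hk
  have hya :=
    lowerCentralSeries_two_le_center h4 (commutatorElement_mem_lowerCentralSeries_two ha y)
  have hyya : ⁅y, ⁅y, a⁆⁆ = 1 := commutatorElement_eq_one_iff_mul_comm.mpr (mem_center_iff.mp hya y)
  have hypa : ⁅y ^ n, a⁆ = 1 :=
    commutatorElement_eq_one_iff_mul_comm.mpr (commute_of_mem_commutator h4 (hpow y) ha)
  have h := commutatorElement_pow_left_of_mem_center (hyya ▸ one_mem (center G)) n
  rw [hypa, hyya, one_pow, one_mul] at h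
  rw [← commutatorElement_inv, inv_pow, ← h, inv_one]

theorem pow_mem_center_of_mem_centralizer {p : ℕ} (hp : Odd p)
    (h4 : (⊤ : Subgroup G).lowerCentralSeries 3 = ⊥) (hpow : ∀ y : G, y ^ p ∈ commutator G)
    {c : G} (hc : c ∈ centralizer (commutator G : Set G)) : c ^ p ∈ center G := by
  have hcP' : ∀ a ∈ commutator G, ⁅c, a⁆ = 1 := fun a ha =>
    commutatorElement_eq_one_iff_mul_comm.mpr (mem_centralizer_iff.mp hc a ha).symm
  rw [mem_center_iff]
  intro g
  have hb := commutatorElement_mem_lowerCentralSeries_two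
    (commutator_mem_commutator (mem_top g) (mem_top c)) g
  have hb1 : ⁅g, ⁅g, c⁆⁆ ^ p.choose 2 = 1 := by
    obtain ⟨m, hm⟩ := Nat.dvd_choose_two_self_of_odd hp
    rw [hm, pow_mul, pow_eq_one_of_mem_lowerCentralSeries_two h4 hpow hb, one_pow]
  have hgc : ⁅g, c⁆ ^ p = 1 :=
    calc ⁅g, c⁆ ^ p = ⁅g, ⁅g, c⁆⁆ ^ p.choose 2 * ⁅g, c⁆ ^ p := by rw [hb1, one_mul]
      _ = ⁅g ^ p, c⁆ :=
          (commutatorElement_pow_left_of_mem_center (lowerCentralSeries_two_le_center h4 hb) p).symm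
      _ = 1 := by rw [← commutatorElement_inv, hcP' _ (hpow g), inv_one]
  have hcg : ⁅c, ⁅c, g⁆⁆ = 1 := hcP' _ (commutator_mem_commutator (mem_top c) (mem_top g))
  have hcgp : ⁅c, g⁆ ^ p = 1 := by rw [← commutatorElement_inv, inv_pow, hgc, inv_one]
  have h := commutatorElement_pow_left_of_mem_center (hcg ▸ one_mem (center G)) p
  rw [hcg, one_pow, one_mul, hcgp] at h
  exact (commutatorElement_eq_one_iff_mul_comm.mp h).symm

theorem pow_mem_commutator_of_isCamina {p : ℕ} [Fact p.Prime] (hp : Odd p) [Finite G]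
    (hG : IsPGroup p G) (hCam : IsCamina G) (h4 : (⊤ : Subgroup G).lowerCentralSeries 3 = ⊥)
    (h3 : (⊤ : Subgroup G).lowerCentralSeries 2 ≠ ⊥) (x : G) : x ^ p ∈ commutator G := by
  by_contra hx
  have hγ : (⊤ : Subgroup G).lowerCentralSeries 2 ≤ commutator G :=
    Subgroup.lowerCentralSeries_antitone ⊤ one_le_two
  have : Nontrivial (commutator G) := (nontrivial_iff_ne_bot _).mpr (ne_bot_of_le_ne_bot h3 hγ)
  obtain ⟨⟨z, hz⟩, hnot⟩ := (hG.to_subgroup (commutator G)).exists_forall_pow_ne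
  obtain ⟨g, rfl⟩ := hCam.exists_commutatorElement_eq hx hz
  have ha : ⁅x, g⁆ ∈ commutator G := commutator_mem_commutator (mem_top x) (mem_top g)
  have hb := commutatorElement_mem_lowerCentralSeries_two ha x
  have hbz := lowerCentralSeries_two_le_center h4 hb
  obtain ⟨m, hm⟩ := Nat.dvd_choose_two_self_of_odd hp
  refine hnot ⟨⁅x, ⁅x, g⁆⁆ ^ m * ⁅x, g⁆,
    mul_mem (pow_mem (hγ hb) m) ha⟩ (Subtype.ext ?_)
  change _ ^ p = ⁅x ^ p, g⁆
  have hcomm : Commute (⁅x, ⁅x, g⁆⁆ ^ m) ⁅x, g⁆ :=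
    (Commute.symm (mem_center_iff.mp hbz ⁅x, g⁆)).pow_left m
  rw [commutatorElement_pow_left_of_mem_center hbz, hm, mul_comm p, pow_mul, hcomm.mul_pow]

end

/-- If `P` is a Camina `p`-group of nilpotence class 3 with `p` odd,
`C = C_P(P')` and `Z = Z(P)`, then `C/Z` is elementary abelian:
`p`-th powers of elements of `C` lie in `Z` and `C` is abelian modulo `Z`. -/
theorem stmt_7 {p : ℕ} [Fact p.Prime] (hodd : Odd p) {P : Type*} [Group P] [Finite P]
    (hP : IsPGroup p P) (hCam : IsCamina P)
    (hclass3 : (⊤ : Subgroup P).lowerCentralSeries 3 = ⊥ ∧ (⊤ : Subgroup P).lowerCentralSeries 2 ≠ ⊥)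
    (C : Subgroup P) (hC : C = Subgroup.centralizer (commutator P : Set P)) :
    (∀ c ∈ C, c ^ p ∈ Subgroup.center P) ∧
      (∀ c ∈ C, ∀ d ∈ C, ⁅c, d⁆ ∈ Subgroup.center P) := by
  obtain ⟨h4, h3⟩ := hclass3
  have hpow := pow_mem_commutator_of_isCamina hodd hP hCam h4 h3
  subst hC
  exact ⟨fun c hc => pow_mem_center_of_mem_centralizer hodd h4 hpow hc,
    fun c hc d hd => commutatorElement_mem_center_of_mem_centralizer hc hd⟩
end

section
/- Let P be a finite p-group with cyclic center Z, and let χ be a faithful irreducible complex character of P. If P is a Camina group of class 3, then χ vanishes on P \ Z, and consequently χ(1)² = |P : Z|. -/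
/-!
Let `x ∉ Z(P)`. If `x ∈ P'`, class 3 makes `z = ⁅x⁻¹, t⁆ ∈ [P', P]` central, and a `t` not
commuting with `x` gives `x ~ x z` with `1 ≠ z ∈ Z(P)`. By Schur's lemma `z` acts by a scalar `c`,
and `c ≠ 1` by faithfulness, so `χ(x) = χ(x z) = c χ(x)` forces `χ(x) = 0`. If `x ∉ P'`, the Camina
condition makes `χ` constant on `x P'`, so `|P'| χ(x) = tr (ρ(x) ∑_{n ∈ P'} ρ(n))`. That sum
commutes with `ρ(P)`, hence is a scalar by Schur, and it absorbs every `ρ(n)`, `n ∈ P'`; as `P'`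
acts nontrivially the scalar is `0`. Finally, in `∑_g χ(g) χ(g⁻¹) = |P|` only the central terms
survive, each equal to `χ(1)²`, so `|Z| χ(1)² = |P| = |Z| |P : Z|`.
-/

open scoped Pointwise

universe u v

open CategoryTheory

open scoped commutatorElement

section GroupTheory

variable {G : Type*} [Group G]

theorem commutatorElement_mem_center_of_lowerCentralSeries_three_eq_bot
    (h : (⊤ : Subgroup G).lowerCentralSeries 3 = ⊥) {x : G} (hx : x ∈ commutator G) (t : G) :
    ⁅x, t⁆ ∈ Subgroup.center G := by
  have hγ₂ : (⊤ : Subgroup G).lowerCentralSeries 2 ≤ Subgroup.center G :=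
    Subgroup.commutator_top_right_eq_bot_iff_le_center.mp h
  apply hγ₂
  rw [Subgroup.lowerCentralSeries_succ, Subgroup.top_lowerCentralSeries_one]
  exact Subgroup.commutator_mem_commutator hx (Subgroup.mem_top t)

theorem exists_mem_center_isConj_mul_of_lowerCentralSeries_three_eq_bot
    (h : (⊤ : Subgroup G).lowerCentralSeries 3 = ⊥) {x : G} (hx : x ∈ commutator G)
    (hxZ : x ∉ Subgroup.center G) : ∃ z ∈ Subgroup.center G, z ≠ 1 ∧ IsConj x (x * z) := by
  obtain ⟨t, ht⟩ : ∃ t, t * x ≠ x * t := by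
    simpa [Subgroup.mem_center_iff] using hxZ
  have hconj : x * ⁅x⁻¹, t⁆ = t * x * t⁻¹ := by group
  refine ⟨⁅x⁻¹, t⁆,
    commutatorElement_mem_center_of_lowerCentralSeries_three_eq_bot h (inv_mem hx) t, ?_,
    isConj_iff.mpr ⟨t, hconj.symm⟩⟩
  intro h1
  rw [h1, mul_one, eq_comm, mul_inv_eq_iff_eq_mul] at hconj
  exact ht hconj

namespace IsCamina

theorem commutator_ne_bot (hG : IsCamina G) : commutator G ≠ ⊥ := fun h =>
  hG.1 fun a b => (Subgroup.commutator_eq_bot_iff_le_centralizer.mp h (Subgroup.mem_top b)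
    a (Subgroup.mem_top a))

theorem isConj_mul_s9 (hG : IsCamina G) {x : G} (hx : x ∉ commutator G) {n : G}
    (hn : n ∈ commutator G) : IsConj x (x * n) := by
  have : x * n ∈ x • (commutator G : Set G) := ⟨n, hn, rfl⟩
  rwa [← hG.2 x hx] at this

end IsCamina

end GroupTheory

namespace FDRep

variable {k : Type u} {G : Type v} [Field k] [Group G] (V : FDRep k G)

theorem character_eq_of_isConj {x y : G} (h : IsConj x y) : V.character x = V.character y := by
  obtain ⟨c, rfl⟩ := isConj_iff.mp h
  rw [char_conj]

theorem character_mul_of_ρ_eq_smul {z : G} {c : k} (hz : V.ρ z = c • 1) (g : G) :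
    V.character (z * g) = c * V.character g := by
  rw [character, map_mul, hz, smul_mul_assoc, one_mul, map_smul, smul_eq_mul, character]

variable [IsAlgClosed k] [Simple V]

theorem exists_eq_smul_one_of_commute (f : Module.End k V) (hf : ∀ g, Commute f (V.ρ g)) :
    ∃ c : k, f = c • 1 := by
  let φ : V ⟶ V :=
    { hom := FGModuleCat.ofHom f
      comm := fun g => by ext v; exact LinearMap.congr_fun (hf g).eq v }
  obtain ⟨c, hc⟩ := endomorphism_simple_eq_smul_id k φ
  exact ⟨c, by ext v; exact (LinearMap.congr_fun (congrArg (fun ψ => ψ.hom.hom.hom) hc) v).symm⟩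

theorem exists_ρ_eq_smul_of_mem_center {z : G} (hz : z ∈ Subgroup.center G) :
    ∃ c : k, V.ρ z = c • 1 :=
  V.exists_eq_smul_one_of_commute (V.ρ z) fun g => by
    rw [Commute, SemiconjBy, ← map_mul, ← map_mul, Subgroup.mem_center_iff.mp hz g]

theorem character_mul_character_inv_of_mem_center {z : G} (hz : z ∈ Subgroup.center G) :
    V.character z * V.character z⁻¹ = V.character 1 ^ 2 := by
  obtain ⟨c, hc⟩ := V.exists_ρ_eq_smul_of_mem_center hz
  have hz1 := V.character_mul_of_ρ_eq_smul hc 1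
  have hzz := V.character_mul_of_ρ_eq_smul hc z⁻¹
  rw [mul_one] at hz1
  rw [mul_inv_cancel] at hzz
  rw [hz1, sq, hzz]
  ring

variable {V}

theorem sum_ρ_eq_zero_of_normal (hV : Function.Injective V.ρ) (N : Subgroup G) [N.Normal]
    [Fintype N] (hN : N ≠ ⊥) : ∑ n : N, V.ρ n = 0 := by
  have hcomm : ∀ g, Commute (∑ n : N, V.ρ n) (V.ρ g) := by
    intro g
    rw [Commute, SemiconjBy, Finset.sum_mul, Finset.mul_sum]
    refine Fintype.sum_equiv (MulAut.conjNormal g⁻¹).toEquiv _ _ fun n => ?_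
    simp only [← map_mul, MulEquiv.toEquiv_eq_coe, EquivLike.coe_coe, MulAut.conjNormal_apply]
    congr 1
    group
  obtain ⟨c, hc⟩ := V.exists_eq_smul_one_of_commute _ hcomm
  have habsorb : ∀ m : N, (∑ n : N, V.ρ n) * V.ρ m = ∑ n : N, V.ρ n := fun m => by
    rw [Finset.sum_mul]
    exact Fintype.sum_equiv (Equiv.mulRight m) _ _ fun n => (map_mul _ _ _).symm
  rw [hc]
  by_contra hc0
  refine hN (eq_bot_iff.mpr fun m hm => hV ?_)
  have := habsorb ⟨m, hm⟩
  rw [hc, smul_mul_assoc, one_mul] at this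
  rw [map_one]
  exact smul_right_injective _ (fun h => hc0 (by rw [h, zero_smul])) this

theorem character_eq_zero_of_isConj_mul_of_mem_center (hV : Function.Injective V.ρ) {x z : G}
    (hz : z ∈ Subgroup.center G) (hz1 : z ≠ 1) (hxz : IsConj x (x * z)) :
    V.character x = 0 := by
  obtain ⟨c, hc⟩ := V.exists_ρ_eq_smul_of_mem_center hz
  have hc1 : c ≠ 1 := by
    rintro rfl
    exact hz1 (hV (by rw [hc, one_smul, map_one]))
  have h := V.character_eq_of_isConj hxz
  rw [char_mul_comm, V.character_mul_of_ρ_eq_smul hc] at h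
  have : (c - 1) * V.character x = 0 := by linear_combination -h
  exact (mul_eq_zero.mp this).resolve_left (sub_ne_zero.mpr hc1)

theorem character_eq_zero_of_forall_isConj_mul [CharZero k] (hV : Function.Injective V.ρ)
    (N : Subgroup G) [N.Normal] [Fintype N] (hN : N ≠ ⊥) {x : G}
    (hx : ∀ n ∈ N, IsConj x (x * n)) : V.character x = 0 := by
  have hsum : ∑ n : N, V.character (x * n) = 0 := by
    simp only [character, map_mul, ← map_sum, ← Finset.mul_sum, sum_ρ_eq_zero_of_normal hV N hN,
      mul_zero, map_zero]
  rw [Finset.sum_congr rfl fun n _ => (V.character_eq_of_isConj (hx n.1 n.2)).symm,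
    Finset.sum_const, nsmul_eq_mul] at hsum
  exact (mul_eq_zero.mp hsum).resolve_left (by simp)

theorem sq_character_one_eq_index_of_eq_zero_off_center [CharZero k] [Fintype G]
    (h : ∀ g ∉ Subgroup.center G, V.character g = 0) :
    V.character 1 ^ 2 = (Subgroup.center G).index := by
  classical
  have hG : (Nat.card G : k) ≠ 0 := Nat.cast_ne_zero.mpr Nat.card_pos.ne'
  have : Invertible (Nat.card G : k) := invertibleOfNonzero hG
  have hnorm := char_orthonormal V V
  rw [if_pos ⟨Iso.refl V⟩, inv_mul_eq_one₀ hG] at hnorm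
  have hterm : ∀ g : G, V.character g * V.character g⁻¹ =
      if g ∈ Subgroup.center G then V.character 1 ^ 2 else 0 := fun g => by
    split_ifs with hg
    · exact V.character_mul_character_inv_of_mem_center hg
    · rw [h g hg, zero_mul]
  simp only [hterm, Finset.sum_ite, Finset.sum_const_zero, add_zero, Finset.sum_const,
    nsmul_eq_mul] at hnorm
  rw [← Fintype.card_subtype, ← Nat.card_eq_fintype_card, ← (Subgroup.center G).card_mul_index,
    Nat.cast_mul] at hnorm
  exact (mul_left_cancel₀ (Nat.cast_ne_zero.mpr Nat.card_pos.ne') hnorm).symm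

end FDRep

theorem stmt_9_general {P : Type} [Group P] [Fintype P]
    (V : FDRep ℂ P) [CategoryTheory.Simple V]
    (hfaithful : Function.Injective V.ρ)
    (hCam : IsCamina P)
    (hclass3 : (⊤ : Subgroup P).lowerCentralSeries 3 = ⊥ ∧ (⊤ : Subgroup P).lowerCentralSeries 2 ≠ ⊥) :
    (∀ x : P, x ∉ Subgroup.center P → V.character x = 0) ∧
      V.character 1 ^ 2 = ((Subgroup.center P).index : ℂ) := by
  classical
  have hvanish : ∀ x : P, x ∉ Subgroup.center P → V.character x = 0 := by
    intro x hxZ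
    by_cases hx : x ∈ commutator P
    · obtain ⟨z, hz, hz1, hxz⟩ :=
        exists_mem_center_isConj_mul_of_lowerCentralSeries_three_eq_bot hclass3.1 hx hxZ
      exact FDRep.character_eq_zero_of_isConj_mul_of_mem_center hfaithful hz hz1 hxz
    · exact FDRep.character_eq_zero_of_forall_isConj_mul hfaithful (commutator P)
        hCam.commutator_ne_bot fun _ hn => hCam.isConj_mul_s9 hx hn
  exact ⟨hvanish, FDRep.sq_character_one_eq_index_of_eq_zero_off_center hvanish⟩

/-- Let `P` be a finite `p`-group with cyclic center `Z` and `χ` a faithful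
irreducible complex character of `P`. If `P` is a Camina group of class 3, then
`χ` vanishes on `P \ Z` and `χ(1)² = |P : Z|`. -/
theorem stmt_9 {p : ℕ} [Fact p.Prime] {P : Type} [Group P] [Fintype P]
    (hP : IsPGroup p P) (hZ : IsCyclic (Subgroup.center P))
    (V : FDRep ℂ P) [CategoryTheory.Simple V]
    (hfaithful : Function.Injective V.ρ)
    (hCam : IsCamina P)
    (hclass3 : (⊤ : Subgroup P).lowerCentralSeries 3 = ⊥ ∧ (⊤ : Subgroup P).lowerCentralSeries 2 ≠ ⊥) :
    (∀ x : P, x ∉ Subgroup.center P → V.character x = 0) ∧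
      V.character 1 ^ 2 = ((Subgroup.center P).index : ℂ) :=
  stmt_9_general V hfaithful hCam hclass3
end

section
/- Let P be a Camina p-group of nilpotence class 3 with cyclic center Z = Z(P), and let C = C_P(P'). Then |P : C| = |P' : Z|. -/
/-!
Because `⁅P', P⁆ = γ₃(P)` is central, `(x, u) ↦ ⁅x, u⁆` is multiplicative in each variable on
`P × P'` with values in the cyclic group `Z(P)`. Its left kernel is `C = C_P(P')` and its right
kernel is `P' ∩ Z(P)`, so it makes each of `P/C` and `P'/(P' ∩ Z(P))` embed into the group of
homomorphisms from the other one to `Z(P)`. A finite group `B` has at most `|B|` homomorphisms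
into a finite cyclic group (embed the latter in `ℂˣ` and use duality for `B^ab`), hence the two
indices bound each other.
-/

open scoped Pointwise

open scoped commutatorElement IsMulCommutative
open Function Subgroup

lemma IsCyclic.exists_injective_monoidHom_units_complex (M : Type*) [CommGroup M] [Finite M]
    [IsCyclic M] : ∃ ι : M →* ℂˣ, Injective ι := by
  have : NeZero (Nat.card M) := ⟨Nat.card_pos.ne'⟩
  let e : M ≃* rootsOfUnity (Nat.card M) ℂ :=
    mulEquivOfCyclicCardEq (HasEnoughRootsOfUnity.natCard_rootsOfUnity ℂ _).symm
  exact ⟨(rootsOfUnity _ ℂ).subtype.comp e.toMonoidHom,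
    (Subgroup.subtype_injective _).comp e.injective⟩

lemma card_monoidHom_le_of_isCyclic (B M : Type*) [Group B] [Finite B] [CommGroup M] [Finite M]
    [IsCyclic M] : Nat.card (B →* M) ≤ Nat.card B := by
  obtain ⟨ι, hι⟩ := IsCyclic.exists_injective_monoidHom_units_complex M
  calc Nat.card (B →* M) ≤ Nat.card (B →* ℂˣ) :=
        Nat.card_le_card_of_injective (ι.comp ·) fun _ _ ↦ (MonoidHom.cancel_left hι).mp
    _ = Nat.card (Abelianization B →* ℂˣ) := Nat.card_congr Abelianization.lift
    _ = Nat.card (Abelianization B) := CommGroup.card_monoidHom_of_hasEnoughRootsOfUnity _ _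
    _ ≤ Nat.card B := Nat.card_le_card_of_surjective _ QuotientGroup.mk_surjective

namespace MonoidHom

variable {A B M : Type*} [Group A] [Group B] [CommGroup M]

lemma ker_flip_kerLift_flip (f : A →* B →* M) :
    (QuotientGroup.kerLift f.flip).flip.ker = f.ker := by
  ext a
  simp only [mem_ker, MonoidHom.ext_iff, QuotientGroup.mk_surjective.forall, flip_apply,
    QuotientGroup.kerLift_mk, one_apply]

lemma index_ker_le_index_ker_flip [Finite B] [Finite M] [IsCyclic M] (f : A →* B →* M) :
    f.ker.index ≤ f.flip.ker.index := by
  let g := (QuotientGroup.kerLift f.flip).flip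
  have : Finite (B ⧸ f.flip.ker →* M) := .of_injective _ DFunLike.coe_injective
  rw [← ker_flip_kerLift_flip, index_eq_card, index_eq_card]
  calc Nat.card (A ⧸ g.ker) ≤ Nat.card (B ⧸ f.flip.ker →* M) :=
        Nat.card_le_card_of_injective _ (QuotientGroup.kerLift_injective g)
    _ ≤ Nat.card (B ⧸ f.flip.ker) := card_monoidHom_le_of_isCyclic _ _

lemma index_ker_eq_index_ker_flip [Finite A] [Finite B] [Finite M] [IsCyclic M]
    (f : A →* B →* M) : f.ker.index = f.flip.ker.index :=
  f.index_ker_le_index_ker_flip.antisymm f.flip.index_ker_le_index_ker_flip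

end MonoidHom

section CentralCommutators

variable {G : Type*} [Group G]

lemma commutatorElement_mul_left_of_mem_center {a b c : G} (h : ⁅b, c⁆ ∈ center G) :
    ⁅a * b, c⁆ = ⁅b, c⁆ * ⁅a, c⁆ := by
  rw [commutatorElement_mul_left_eq_conj_mul, mem_center_iff.mp h a, mul_inv_cancel_right]

lemma commutatorElement_mul_right_of_mem_center {a b c : G} (h : ⁅a, c⁆ ∈ center G) :
    ⁅a, b * c⁆ = ⁅a, b⁆ * ⁅a, c⁆ := by
  rw [commutatorElement_mul_right_eq_mul_conj, mul_assoc _ b, mem_center_iff.mp h b,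
    ← mul_assoc, mul_inv_cancel_right]

variable {H : Subgroup G}

lemma commutatorElement_mem_center_of_commutator_top_le_center (hH : ⁅H, ⊤⁆ ≤ center G)
    {x u : G} (hu : u ∈ H) : ⁅x, u⁆ ∈ center G := by
  rw [← commutatorElement_inv]
  exact inv_mem (hH (commutator_mem_commutator hu (mem_top x)))

def commutatorPairing (hH : ⁅H, ⊤⁆ ≤ center G) : G →* H →* center G where
  toFun x :=
    { toFun u := ⟨⁅x, u⁆, commutatorElement_mem_center_of_commutator_top_le_center hH u.2⟩
      map_one' := by ext; simp
      map_mul' u v := by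
        ext
        exact commutatorElement_mul_right_of_mem_center
          (commutatorElement_mem_center_of_commutator_top_le_center hH v.2) }
  map_one' := by ext; simp
  map_mul' x y := by
    ext u
    simp only [MonoidHom.coe_mk, OneHom.coe_mk, MonoidHom.mul_apply, Subgroup.coe_mul]
    rw [commutatorElement_mul_left_of_mem_center
      (commutatorElement_mem_center_of_commutator_top_le_center hH u.2)]
    exact mem_center_iff.mp (commutatorElement_mem_center_of_commutator_top_le_center hH u.2) _


@[simp]
lemma commutatorPairing_apply_coe (hH : ⁅H, ⊤⁆ ≤ center G) (x : G) (u : H) :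
    (commutatorPairing hH x u : G) = ⁅x, (u : G)⁆ :=
  rfl

lemma ker_commutatorPairing (hH : ⁅H, ⊤⁆ ≤ center G) :
    (commutatorPairing hH).ker = centralizer H := by
  ext x
  simp only [MonoidHom.mem_ker, MonoidHom.ext_iff, Subtype.ext_iff, Subtype.forall,
    commutatorPairing_apply_coe, MonoidHom.one_apply, OneMemClass.coe_one,
    commutatorElement_eq_one_iff_commute, mem_centralizer_iff, SetLike.mem_coe]
  exact forall₂_congr fun u _ ↦ eq_comm

lemma ker_flip_commutatorPairing (hH : ⁅H, ⊤⁆ ≤ center G) :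
    (commutatorPairing hH).flip.ker = (center G).subgroupOf H := by
  ext u
  simp only [MonoidHom.mem_ker, MonoidHom.ext_iff, Subtype.ext_iff, MonoidHom.flip_apply,
    commutatorPairing_apply_coe, MonoidHom.one_apply, OneMemClass.coe_one,
    commutatorElement_eq_one_iff_commute, mem_subgroupOf, mem_center_iff]
  rfl

theorem index_centralizer_eq_relIndex_center [Finite G] [IsCyclic (center G)]
    (hH : ⁅H, ⊤⁆ ≤ center G) :
    (centralizer (H : Set G)).index = (center G).relIndex H := by
  rw [← ker_commutatorPairing hH, relIndex, ← ker_flip_commutatorPairing hH]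
  exact (commutatorPairing hH).index_ker_eq_index_ker_flip

end CentralCommutators

theorem stmt_10_general {P : Type*} [Group P] [Finite P]
    (hclass3 : (⊤ : Subgroup P).lowerCentralSeries 3 = ⊥ ∧ (⊤ : Subgroup P).lowerCentralSeries 2 ≠ ⊥)
    (hZ : IsCyclic (Subgroup.center P))
    (C : Subgroup P) (hC : C = Subgroup.centralizer (commutator P : Set P)) :
    C.index = (Subgroup.center P).relIndex (commutator P) := by
  have hcentral : ⁅commutator P, ⊤⁆ ≤ center P := by
    rw [← top_lowerCentralSeries_one, ← Subgroup.lowerCentralSeries_succ]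
    exact commutator_top_right_eq_bot_iff_le_center.mp hclass3.1
  subst hC
  exact index_centralizer_eq_relIndex_center hcentral

/-- If `P` is a Camina `p`-group of nilpotence class 3 with cyclic center `Z`,
and `C = C_P(P')`, then `|P : C| = |P' : Z|`. -/
theorem stmt_10 {p : ℕ} [Fact p.Prime] {P : Type*} [Group P] [Finite P]
    (hP : IsPGroup p P) (hCam : IsCamina P)
    (hclass3 : (⊤ : Subgroup P).lowerCentralSeries 3 = ⊥ ∧ (⊤ : Subgroup P).lowerCentralSeries 2 ≠ ⊥)
    (hZ : IsCyclic (Subgroup.center P))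
    (C : Subgroup P) (hC : C = Subgroup.centralizer (commutator P : Set P)) :
    C.index = (Subgroup.center P).relIndex (commutator P) :=
  stmt_10_general hclass3 hZ C hC
end

section
/- Let P be a Camina p-group of nilpotence class 2. Then P' is elementary abelian. -/
open scoped Pointwise

/-!
Fix `x ∉ P'`. Since `P'` is central, `g x g⁻¹ = x c` gives `g xᵖ g⁻¹ = xᵖ cᵖ`. If `xᵖ ∉ P'`, then
`xᵖ P'` is the class of `xᵖ`, so every element of `P'` is a `p`-th power of an element of `P'`;
on the finite `p`-group `P'` the `p`-power map is then injective, which forces `P' = 1`,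
impossible in a nonabelian group.
Hence `xᵖ` is central, and as `x c` runs over the class of `x`, the same identity gives `cᵖ = 1`.
-/

open Subgroup

section CentralConjugation

variable {G : Type*} [Group G]

theorem conj_pow_eq_mul_pow_of_mem_center {g x c : G} (hc : c ∈ center G)
    (h : g * x * g⁻¹ = x * c) (n : ℕ) : g * x ^ n * g⁻¹ = x ^ n * c ^ n := by
  rw [← conj_pow, h, Commute.mul_pow (mem_center_iff.mp hc x)]

variable {N : Subgroup G}

theorem pow_eq_one_of_smul_subset_conj (hN : N ≤ center G) {x : G}
    (hx : x • (N : Set G) ⊆ {y | IsConj x y}) {n : ℕ} (hxn : x ^ n ∈ center G)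
    {c : G} (hc : c ∈ N) : c ^ n = 1 := by
  obtain ⟨g, hg⟩ := isConj_iff.mp (hx ⟨c, hc, rfl⟩)
  have h := conj_pow_eq_mul_pow_of_mem_center (hN hc) hg n
  rw [mem_center_iff.mp hxn g, mul_inv_cancel_right] at h
  exact mul_eq_left.mp h.symm

theorem exists_pow_eq_of_conj_subset_smul (hN : N ≤ center G) {x : G}
    (hx : {y | IsConj x y} ⊆ x • (N : Set G)) {n : ℕ}
    (hxn : x ^ n • (N : Set G) ⊆ {y | IsConj (x ^ n) y}) {d : G} (hd : d ∈ N) :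
    ∃ c ∈ N, c ^ n = d := by
  obtain ⟨g, hg⟩ := isConj_iff.mp (hxn ⟨d, hd, rfl⟩)
  obtain ⟨c, hc, hgx⟩ := hx (isConj_iff.mpr ⟨g, rfl⟩)
  refine ⟨c, hc, mul_left_cancel (a := x ^ n) ?_⟩
  rw [← conj_pow_eq_mul_pow_of_mem_center (hN hc) hgx.symm, hg]
  rfl

end CentralConjugation

theorem IsPGroup.subsingleton_of_pow_surjective {p : ℕ} {H : Type*} [Group H] [Finite H]
    (hH : IsPGroup p H) (hsurj : Function.Surjective fun h : H ↦ h ^ p) : Subsingleton H := by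
  refine subsingleton_of_forall_eq 1 fun a ↦ ?_
  obtain ⟨k, hk⟩ := hH a
  refine (Finite.injective_iff_surjective.mpr hsurj).iterate k ?_
  simp only [pow_iterate, hk, one_pow]

namespace IsCamina

variable {P : Type*} [Group P]

theorem commutator_ne_bot_s13 (hCam : IsCamina P) : commutator P ≠ ⊥ := by
  intro hbot
  rw [commutator_def, commutator_top_left_eq_bot_iff_le_center] at hbot
  exact hCam.1 fun a b ↦ mem_center_iff.mp (hbot (mem_top b)) a

theorem exists_notMem_commutator (hCam : IsCamina P) (hclass2 : commutator P ≤ center P) :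
    ∃ x, x ∉ commutator P := by
  by_contra! h
  exact hCam.1 fun a b ↦ mem_center_iff.mp (hclass2 (h b)) a

theorem pow_mem_commutator_s13 {p : ℕ} [Finite P] (hP : IsPGroup p P) (hCam : IsCamina P)
    (hclass2 : commutator P ≤ center P) {x : P} (hx : x ∉ commutator P) :
    x ^ p ∈ commutator P := by
  by_contra hxp
  have hsurj : Function.Surjective fun c : commutator P ↦ c ^ p := fun d ↦ by
    obtain ⟨c, hc, hcd⟩ :=
      exists_pow_eq_of_conj_subset_smul hclass2 (hCam.2 x hx).le (hCam.2 _ hxp).ge d.2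
    exact ⟨⟨c, hc⟩, Subtype.ext hcd⟩
  have := (hP.to_subgroup _).subsingleton_of_pow_surjective hsurj
  exact hCam.commutator_ne_bot_s13 (eq_bot_of_subsingleton _)

end IsCamina

theorem stmt_13_general {p : ℕ} {P : Type*} [Group P] [Finite P]
    (hP : IsPGroup p P) (hCam : IsCamina P)
    (hclass2 : commutator P ≤ Subgroup.center P) :
    (∀ x ∈ commutator P, x ^ p = 1) ∧
      ∀ x ∈ commutator P, ∀ y ∈ commutator P, x * y = y * x := by
  refine ⟨fun c hc ↦ ?_, fun x _ y hy ↦ mem_center_iff.mp (hclass2 hy) x⟩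
  obtain ⟨x, hx⟩ := hCam.exists_notMem_commutator hclass2
  exact pow_eq_one_of_smul_subset_conj hclass2 (hCam.2 x hx).ge
    (hclass2 (hCam.pow_mem_commutator_s13 hP hclass2 hx)) hc

/-- If `P` is a Camina `p`-group of nilpotence class 2, then `P'` is
elementary abelian. -/
theorem stmt_13 {p : ℕ} [Fact p.Prime] {P : Type*} [Group P] [Finite P]
    (hP : IsPGroup p P) (hCam : IsCamina P)
    (hclass2 : commutator P ≤ Subgroup.center P) :
    (∀ x ∈ commutator P, x ^ p = 1) ∧
      ∀ x ∈ commutator P, ∀ y ∈ commutator P, x * y = y * x :=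
  stmt_13_general hP hCam hclass2
end
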